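/- Let 0 < α < 1 and let φ be a bounded Lipschitz function on ℝ with bounded derivative. Let {a_j} be ρ-lacunary with ρ ≤ a_{j+1}/a_j ≤ ρ², {v_j} bounded. Then for t ∈ ℝ and integers 0 < L < M, |Σ_{j=−M}^{−L} v_j (P^α_{a_{j+1}} φ(t) − P^α_{a_j} φ(t))| ≤ C (‖φ'‖_∞ + ‖φ‖_∞) a_{−L}^{2α}, with C depending only on α, ρ, sup|v_j|; in particular the negative tail tends to 0 as L → ∞. -/

import Mathlib

/-!
For every `τ > 0` the kernel `τ^(2α) e^(-τ²/(4s)) s^(-1-α)` has total mass `4^α Γ(α)` on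
`(0, ∞)` (the substitution `s = 1/x` turns it into a Gamma integral), so
`P^α_τ φ(t) - φ(t)` is the normalized integral of the kernel against `φ(t - s) - φ(t)`.
Splitting at `s = 1` and using `|φ(t - s) - φ(t)| ≤ A' s` below and `≤ 2A` above gives
`|P^α_τ φ(t) - φ(t)| ≲ (A' + A) τ^(2α)`. By lacunarity `a_j^(2α)` grows at least geometrically
with ratio `ρ^(2α) > 1`, so the sum over `j ≤ -L` is dominated by a geometric series whose
total is a multiple of its last term `a_{-L}^(2α)`.
-/

open Real MeasureTheory Finset

/-- The one-sided fractional Poisson-type operator. -/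
noncomputable def fracPoisson (α τ : ℝ) (f : ℝ → ℝ) (t : ℝ) : ℝ :=
  (1 / (4 ^ α * Real.Gamma α)) *
    ∫ s in Set.Ioi (0:ℝ), τ ^ (2 * α) * Real.exp (-τ ^ 2 / (4 * s)) / s ^ (1 + α) * f (t - s)

noncomputable def fracPoissonKernel (α τ s : ℝ) : ℝ :=
  τ ^ (2 * α) * exp (-τ ^ 2 / (4 * s)) / s ^ (1 + α)

lemma fracPoisson_eq_integral_kernel (α τ : ℝ) (f : ℝ → ℝ) (t : ℝ) :
    fracPoisson α τ f t =
      1 / (4 ^ α * Gamma α) * ∫ s in Set.Ioi 0, fracPoissonKernel α τ s * f (t - s) :=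
  rfl

lemma fracPoissonKernel_nonneg (α : ℝ) {τ s : ℝ} (hτ : 0 ≤ τ) (hs : 0 ≤ s) :
    0 ≤ fracPoissonKernel α τ s := by
  unfold fracPoissonKernel; positivity

lemma fracPoissonKernel_le (α : ℝ) {τ s : ℝ} (hτ : 0 ≤ τ) (hs : 0 < s) :
    fracPoissonKernel α τ s ≤ τ ^ (2 * α) * s ^ (-(1 + α)) := by
  have hexp : exp (-τ ^ 2 / (4 * s)) ≤ 1 := exp_le_one_iff.2 (by
    have : 0 ≤ τ ^ 2 / (4 * s) := by positivity
    rw [neg_div]; linarith)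
  rw [fracPoissonKernel, rpow_neg hs.le, ← div_eq_mul_inv]
  gcongr
  exact mul_le_of_le_one_right (by positivity) hexp

/-- The substitution `s = 1 / x` turns the kernel into a Gamma-function integrand. -/
lemma fracPoissonKernel_comp_inv (α τ : ℝ) {x : ℝ} (hx : 0 < x) :
    (|(-1 : ℝ)| * x ^ ((-1 : ℝ) - 1)) • fracPoissonKernel α τ (x ^ (-1 : ℝ)) =
      τ ^ (2 * α) * (x ^ (α - 1) * exp (-(τ ^ 2 / 4 * x))) := by
  have e : x ^ ((-1 : ℝ) - 1) / (x⁻¹) ^ (1 + α) = x ^ (α - 1) := by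
    rw [inv_rpow hx.le, div_inv_eq_mul, ← rpow_add hx]; ring_nf
  have e' : -τ ^ 2 / (4 * x⁻¹) = -(τ ^ 2 / 4 * x) := by field_simp
  rw [rpow_neg_one, fracPoissonKernel, smul_eq_mul, abs_neg, abs_one, one_mul, ← e, e']
  ring

lemma integrableOn_fracPoissonKernel {α τ : ℝ} (hα : 0 < α) (hτ : 0 < τ) :
    IntegrableOn (fracPoissonKernel α τ) (Set.Ioi 0) := by
  rw [← integrableOn_Ioi_comp_rpow_iff _ (by norm_num : (-1 : ℝ) ≠ 0)]
  refine IntegrableOn.congr_fun ?_ (fun x hx => (fracPoissonKernel_comp_inv α τ hx).symm)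
    measurableSet_Ioi
  have := integrableOn_rpow_mul_exp_neg_mul_rpow (s := α - 1) (p := 1) (b := τ ^ 2 / 4)
    (by linarith) one_pos (by positivity)
  refine (this.congr_fun (fun x hx => ?_) measurableSet_Ioi).const_mul _
  simp [rpow_one, neg_mul]

lemma integral_fracPoissonKernel {α τ : ℝ} (hα : 0 < α) (hτ : 0 < τ) :
    ∫ s in Set.Ioi 0, fracPoissonKernel α τ s = 4 ^ α * Gamma α := by
  rw [← integral_comp_rpow_Ioi _ (by norm_num : (-1 : ℝ) ≠ 0),
    setIntegral_congr_fun measurableSet_Ioi (fun x hx => fracPoissonKernel_comp_inv α τ hx),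
    integral_const_mul, integral_rpow_mul_exp_neg_mul_Ioi hα (by positivity),
    one_div_div, div_rpow (by norm_num) (by positivity), ← rpow_natCast_mul hτ.le]
  push_cast
  field_simp

lemma integral_Ioc_zero_one_rpow {r : ℝ} (hr : -1 < r) :
    ∫ s in Set.Ioc 0 1, s ^ r = 1 / (r + 1) := by
  rw [← intervalIntegral.integral_of_le zero_le_one, integral_rpow (Or.inl hr), one_rpow,
    zero_rpow (by linarith)]
  ring

lemma integrableOn_fracPoissonKernel_mul {α τ B : ℝ} {ψ : ℝ → ℝ} (hα : 0 < α) (hτ : 0 < τ)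
    (hψ : Measurable ψ) (hB : ∀ s, |ψ s| ≤ B) :
    IntegrableOn (fun s => fracPoissonKernel α τ s * ψ s) (Set.Ioi 0) :=
  (integrableOn_fracPoissonKernel hα hτ).mul_bdd hψ.aestronglyMeasurable
    (Filter.Eventually.of_forall hB)

section KernelEstimates

variable {α τ A A' : ℝ} {φ : ℝ → ℝ}

lemma abs_setIntegral_Ioc_fracPoissonKernel_mul_sub_le (hα : α < 1) (hτ : 0 ≤ τ)
    (hA' : ∀ x y, |φ x - φ y| ≤ A' * |x - y|) (t : ℝ) :
    |∫ s in Set.Ioc 0 1, fracPoissonKernel α τ s * (φ (t - s) - φ t)|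
      ≤ τ ^ (2 * α) * (A' / (1 - α)) := by
  have hbound : ∀ s ∈ Set.Ioc (0 : ℝ) 1,
      ‖fracPoissonKernel α τ s * (φ (t - s) - φ t)‖ ≤ A' * τ ^ (2 * α) * s ^ (-α) := by
    intro s hs
    have hs0 : 0 < s := hs.1
    have hΔ : |φ (t - s) - φ t| ≤ A' * s := by
      simpa [abs_of_pos hs0] using hA' (t - s) t
    calc ‖fracPoissonKernel α τ s * (φ (t - s) - φ t)‖
        = fracPoissonKernel α τ s * |φ (t - s) - φ t| := by
          rw [Real.norm_eq_abs, abs_mul, abs_of_nonneg (fracPoissonKernel_nonneg α hτ hs0.le)]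
      _ ≤ τ ^ (2 * α) * s ^ (-(1 + α)) * (A' * s) :=
          mul_le_mul (fracPoissonKernel_le α hτ hs0) hΔ (abs_nonneg _) (by positivity)
      _ = A' * τ ^ (2 * α) * s ^ (-α) := by
          rw [show -α = -(1 + α) + 1 by ring, rpow_add_one hs0.ne']; ring
  have hint : IntegrableOn (fun s : ℝ => A' * τ ^ (2 * α) * s ^ (-α)) (Set.Ioc 0 1) :=
    (intervalIntegral.intervalIntegrable_rpow' (by linarith)).1.const_mul _
  calc |∫ s in Set.Ioc 0 1, fracPoissonKernel α τ s * (φ (t - s) - φ t)|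
      ≤ ∫ s in Set.Ioc 0 1, A' * τ ^ (2 * α) * s ^ (-α) :=
        norm_integral_le_of_norm_le hint ((ae_restrict_iff' measurableSet_Ioc).2
          (Filter.Eventually.of_forall hbound))
    _ = τ ^ (2 * α) * (A' / (1 - α)) := by
        rw [integral_const_mul, integral_Ioc_zero_one_rpow (by linarith)]
        ring_nf

lemma abs_setIntegral_Ioi_fracPoissonKernel_mul_sub_le (hα : 0 < α) (hτ : 0 ≤ τ)
    (hA : ∀ x, |φ x| ≤ A) (t : ℝ) :
    |∫ s in Set.Ioi 1, fracPoissonKernel α τ s * (φ (t - s) - φ t)|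
      ≤ τ ^ (2 * α) * (2 * A / α) := by
  have hbound : ∀ s ∈ Set.Ioi (1 : ℝ),
      ‖fracPoissonKernel α τ s * (φ (t - s) - φ t)‖ ≤ 2 * A * τ ^ (2 * α) * s ^ (-(1 + α)) := by
    intro s hs
    have hs0 : 0 < s := one_pos.trans hs
    have hΔ : |φ (t - s) - φ t| ≤ 2 * A := by
      linarith [abs_sub (φ (t - s)) (φ t), hA (t - s), hA t]
    calc ‖fracPoissonKernel α τ s * (φ (t - s) - φ t)‖
        = fracPoissonKernel α τ s * |φ (t - s) - φ t| := by
          rw [Real.norm_eq_abs, abs_mul, abs_of_nonneg (fracPoissonKernel_nonneg α hτ hs0.le)]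
      _ ≤ τ ^ (2 * α) * s ^ (-(1 + α)) * (2 * A) :=
          mul_le_mul (fracPoissonKernel_le α hτ hs0) hΔ (abs_nonneg _) (by positivity)
      _ = 2 * A * τ ^ (2 * α) * s ^ (-(1 + α)) := by ring
  have hint : IntegrableOn (fun s : ℝ => 2 * A * τ ^ (2 * α) * s ^ (-(1 + α))) (Set.Ioi 1) :=
    (integrableOn_Ioi_rpow_of_lt (by linarith) one_pos).const_mul _
  calc |∫ s in Set.Ioi 1, fracPoissonKernel α τ s * (φ (t - s) - φ t)|
      ≤ ∫ s in Set.Ioi 1, 2 * A * τ ^ (2 * α) * s ^ (-(1 + α)) :=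
        norm_integral_le_of_norm_le hint ((ae_restrict_iff' measurableSet_Ioi).2
          (Filter.Eventually.of_forall hbound))
    _ = τ ^ (2 * α) * (2 * A / α) := by
        rw [integral_const_mul, integral_Ioi_rpow_of_lt (by linarith) one_pos, one_rpow,
          show -(1 + α) + 1 = -α by ring]
        field_simp

lemma abs_fracPoisson_sub_le (hα0 : 0 < α) (hα1 : α < 1) (hτ : 0 < τ) (hA : ∀ x, |φ x| ≤ A)
    (hA' : ∀ x y, |φ x - φ y| ≤ A' * |x - y|) (t : ℝ) :
    |fracPoisson α τ φ t - φ t|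
      ≤ 1 / (4 ^ α * Gamma α) * (τ ^ (2 * α) * (A' / (1 - α) + 2 * A / α)) := by
  have hφ : Continuous φ :=
    (LipschitzWith.of_dist_le' (K := A') (by simpa only [Real.dist_eq] using hA')).continuous
  have hφt : Measurable fun s => φ (t - s) := by fun_prop
  have hint : IntegrableOn (fun s => fracPoissonKernel α τ s * (φ (t - s) - φ t)) (Set.Ioi 0) :=
    integrableOn_fracPoissonKernel_mul hα0 hτ (hφt.sub_const _)
      (fun s => (abs_sub _ _).trans (add_le_add (hA _) (hA _)))
  have hrepr : fracPoisson α τ φ t - φ t =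
      1 / (4 ^ α * Gamma α) * ∫ s in Set.Ioi 0, fracPoissonKernel α τ s * (φ (t - s) - φ t) := by
    simp_rw [mul_sub]
    rw [integral_sub (integrableOn_fracPoissonKernel_mul hα0 hτ hφt (fun s => hA (t - s)))
      ((integrableOn_fracPoissonKernel hα0 hτ).mul_const _), integral_mul_const,
      integral_fracPoissonKernel hα0 hτ, fracPoisson_eq_integral_kernel]
    have := Gamma_pos_of_pos hα0
    field_simp
  have hsplit : ∫ s in Set.Ioi 0, fracPoissonKernel α τ s * (φ (t - s) - φ t) =
      (∫ s in Set.Ioc 0 1, fracPoissonKernel α τ s * (φ (t - s) - φ t)) +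
        ∫ s in Set.Ioi 1, fracPoissonKernel α τ s * (φ (t - s) - φ t) := by
    rw [← Set.Ioc_union_Ioi_eq_Ioi zero_le_one] at hint ⊢
    exact setIntegral_union (Set.Ioc_disjoint_Ioi le_rfl) measurableSet_Ioi
      (hint.mono_set Set.subset_union_left) (hint.mono_set Set.subset_union_right)
  rw [hrepr, abs_mul, abs_of_pos (by have := Gamma_pos_of_pos hα0; positivity), hsplit]
  gcongr
  calc _ ≤ _ := abs_add_le _ _
    _ ≤ τ ^ (2 * α) * (A' / (1 - α)) + τ ^ (2 * α) * (2 * A / α) :=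
        add_le_add (abs_setIntegral_Ioc_fracPoissonKernel_mul_sub_le hα1 hτ.le hA' t)
          (abs_setIntegral_Ioi_fracPoissonKernel_mul_sub_le hα0 hτ.le hA t)
    _ = τ ^ (2 * α) * (A' / (1 - α) + 2 * A / α) := by ring

lemma abs_fracPoisson_sub_fracPoisson_le {τ₁ τ₂ : ℝ} (hα0 : 0 < α)
    (hα1 : α < 1) (hτ₁ : 0 < τ₁) (hτ₂ : 0 < τ₂) (hA : ∀ x, |φ x| ≤ A)
    (hA' : ∀ x y, |φ x - φ y| ≤ A' * |x - y|) (t : ℝ) :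
    |fracPoisson α τ₂ φ t - fracPoisson α τ₁ φ t|
      ≤ 1 / (4 ^ α * Gamma α) * (1 / (1 - α) + 2 / α) * (A' + A) *
          (τ₁ ^ (2 * α) + τ₂ ^ (2 * α)) := by
  have hA0 : 0 ≤ A := (abs_nonneg _).trans (hA 0)
  have hA'0 : 0 ≤ A' := by simpa using (abs_nonneg _).trans (hA' 1 0)
  have hK : A' / (1 - α) + 2 * A / α ≤ (1 / (1 - α) + 2 / α) * (A' + A) := by
    have : 0 < 1 - α := by linarith
    have h : (1 / (1 - α) + 2 / α) * (A' + A) =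
        A' / (1 - α) + 2 * A / α + (A / (1 - α) + 2 * A' / α) := by ring
    rw [h]
    have : 0 ≤ A / (1 - α) + 2 * A' / α := by positivity
    linarith
  calc |fracPoisson α τ₂ φ t - fracPoisson α τ₁ φ t|
      ≤ |fracPoisson α τ₂ φ t - φ t| + |fracPoisson α τ₁ φ t - φ t| :=
        (abs_sub_le _ (φ t) _).trans_eq (by rw [abs_sub_comm (φ t)])
    _ ≤ 1 / (4 ^ α * Gamma α) * (τ₂ ^ (2 * α) * (A' / (1 - α) + 2 * A / α)) +
          1 / (4 ^ α * Gamma α) * (τ₁ ^ (2 * α) * (A' / (1 - α) + 2 * A / α)) :=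
        add_le_add (abs_fracPoisson_sub_le hα0 hα1 hτ₂ hA hA' t)
          (abs_fracPoisson_sub_le hα0 hα1 hτ₁ hA hA' t)
    _ = 1 / (4 ^ α * Gamma α) * (A' / (1 - α) + 2 * A / α) * (τ₁ ^ (2 * α) + τ₂ ^ (2 * α)) := by
        ring
    _ ≤ 1 / (4 ^ α * Gamma α) * ((1 / (1 - α) + 2 / α) * (A' + A)) *
          (τ₁ ^ (2 * α) + τ₂ ^ (2 * α)) := by gcongr
    _ = _ := by ring

end KernelEstimates

lemma sum_Icc_le_of_mul_le_succ {b : ℤ → ℝ} {r : ℝ} (hr : 1 < r) (hb : ∀ j, 0 ≤ b j)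
    (hlac : ∀ j, r * b j ≤ b (j + 1)) (m n : ℤ) :
    ∑ j ∈ Icc m n, b j ≤ r / (r - 1) * b n := by
  have hr1 : 0 < r - 1 := by linarith
  rcases lt_or_ge n m with h | h
  · rw [Icc_eq_empty_of_lt h, sum_empty]
    exact mul_nonneg (by positivity) (hb n)
  induction n, h using Int.leInduction with
  | base =>
    rw [Icc_self, sum_singleton]
    exact le_mul_of_one_le_left (hb m) ((one_le_div hr1).2 (by linarith))
  | succ n hmn ih =>
    rw [← insert_Icc_right_eq_Icc_add_one (by omega), sum_insert (by simp)]
    have := hlac n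
    calc b (n + 1) + ∑ j ∈ Icc m n, b j ≤ b (n + 1) + r / (r - 1) * b n := by gcongr
      _ ≤ b (n + 1) + b (n + 1) / (r - 1) := by
          rw [div_mul_eq_mul_div]; gcongr
      _ = r / (r - 1) * b (n + 1) := by field_simp; ring

lemma sum_Icc_rpow_add_rpow_succ_le {a : ℤ → ℝ} {ρ β : ℝ} (hρ : 1 < ρ) (hβ : 0 < β)
    (ha : ∀ j, 0 < a j) (hrat : ∀ j, ρ ≤ a (j + 1) / a j ∧ a (j + 1) / a j ≤ ρ ^ 2) (m n : ℤ) :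
    ∑ j ∈ Icc m n, (a j ^ β + a (j + 1) ^ β)
      ≤ ρ ^ β / (ρ ^ β - 1) * (1 + (ρ ^ 2) ^ β) * a n ^ β := by
  have hρ0 : 0 < ρ := one_pos.trans hρ
  have hr : 1 < ρ ^ β := one_lt_rpow hρ hβ
  have hlac : ∀ j, ρ ^ β * a j ^ β ≤ a (j + 1) ^ β := fun j => by
    rw [← mul_rpow hρ0.le (ha j).le]
    exact rpow_le_rpow (mul_pos hρ0 (ha j)).le ((le_div_iff₀ (ha j)).1 (hrat j).1) hβ.le
  have hsucc : a (n + 1) ^ β ≤ (ρ ^ 2) ^ β * a n ^ β := by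
    rw [← mul_rpow (by positivity) (ha n).le]
    exact rpow_le_rpow (ha _).le ((div_le_iff₀ (ha n)).1 (hrat n).2) hβ.le
  have hb : ∀ j, 0 ≤ a j ^ β := fun j => (rpow_pos_of_pos (ha j) β).le
  rw [sum_add_distrib]
  calc _ ≤ ρ ^ β / (ρ ^ β - 1) * a n ^ β + ρ ^ β / (ρ ^ β - 1) * a (n + 1) ^ β :=
        add_le_add (sum_Icc_le_of_mul_le_succ hr hb hlac m n)
          (sum_Icc_le_of_mul_le_succ hr (fun j => hb (j + 1)) (fun j => hlac (j + 1)) m n)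
    _ ≤ ρ ^ β / (ρ ^ β - 1) * a n ^ β + ρ ^ β / (ρ ^ β - 1) * ((ρ ^ 2) ^ β * a n ^ β) := by
        have : 0 ≤ ρ ^ β / (ρ ^ β - 1) := div_nonneg (by positivity) (by linarith)
        gcongr
    _ = _ := by ring

theorem stmt_15 (α ρ V : ℝ) (hα0 : 0 < α) (hα1 : α < 1) (hρ : 1 < ρ) (hV : 0 < V) :
    ∃ C > 0, ∀ (a v : ℤ → ℝ), (∀ j, 0 < a j) →
      (∀ j, ρ ≤ a (j + 1) / a j ∧ a (j + 1) / a j ≤ ρ ^ 2) →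
      (∀ j, |v j| ≤ V) →
      ∀ (φ : ℝ → ℝ) (A A' : ℝ), (∀ x, |φ x| ≤ A) →
        (∀ x y, |φ x - φ y| ≤ A' * |x - y|) →
      ∀ t : ℝ, ∀ L M : ℤ, 0 < L → L < M →
        |∑ j ∈ Finset.Icc (-M) (-L),
            v j * (fracPoisson α (a (j + 1)) φ t - fracPoisson α (a j) φ t)|
          ≤ C * (A' + A) * (a (-L)) ^ (2 * α) := by
  set D := 1 / (4 ^ α * Gamma α) * (1 / (1 - α) + 2 / α)
  set R := ρ ^ (2 * α) / (ρ ^ (2 * α) - 1) * (1 + (ρ ^ 2) ^ (2 * α))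
  have hD : 0 < D := by
    have := Gamma_pos_of_pos hα0
    have : 0 < 1 - α := by linarith
    positivity
  have hR : 0 < R := by
    have : 1 < ρ ^ (2 * α) := one_lt_rpow hρ (by positivity)
    have : 0 < ρ ^ (2 * α) - 1 := by linarith
    positivity
  refine ⟨V * D * R, by positivity, ?_⟩
  intro a v ha hrat hv φ A A' hA hA' t L M _ _
  have hA0 : 0 ≤ A := (abs_nonneg _).trans (hA 0)
  have hA'0 : 0 ≤ A' := by simpa using (abs_nonneg _).trans (hA' 1 0)
  calc _ ≤ ∑ j ∈ Icc (-M) (-L),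
          |v j * (fracPoisson α (a (j + 1)) φ t - fracPoisson α (a j) φ t)| :=
        abs_sum_le_sum_abs _ _
    _ ≤ ∑ j ∈ Icc (-M) (-L), V * D * (A' + A) * (a j ^ (2 * α) + a (j + 1) ^ (2 * α)) := by
        refine sum_le_sum fun j _ => ?_
        rw [abs_mul, mul_assoc, mul_assoc]
        exact mul_le_mul (hv j) ((abs_fracPoisson_sub_fracPoisson_le hα0 hα1 (ha j) (ha (j + 1))
          hA hA' t).trans_eq (by ring)) (abs_nonneg _) hV.le
    _ ≤ V * D * (A' + A) * (R * a (-L) ^ (2 * α)) := by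
        rw [← mul_sum]
        gcongr
        exact (sum_Icc_rpow_add_rpow_succ_le hρ (by positivity) ha hrat _ _).trans_eq (by ring)
    _ = V * D * R * (A' + A) * a (-L) ^ (2 * α) := by ring
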